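/- Every in-funnel is a cascade; consequently, coarsening a DAG along a partition into in-funnels yields an acyclic graph. -/

import Mathlib

def IsCascade {V : Type*} (E : V → V → Prop) (U : Set V) : Prop :=
  ∀ v ∈ U, ∀ u ∈ U, (∃ w, w ∉ U ∧ E w v) → (∃ w, w ∉ U ∧ E u w) →
    Relation.ReflTransGen E v u

/-- An in-funnel: a cascade with at most one vertex having an outgoing cut edge. -/
def IsInFunnel {V : Type*} (E : V → V → Prop) (U : Set V) : Prop :=
  IsCascade E U ∧ {u | u ∈ U ∧ ∃ w, w ∉ U ∧ E u w}.Subsingleton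

def coarseEdge {V : Type*} (E : V → V → Prop) (P : Set (Set V))
    (U W : {S // S ∈ P}) : Prop :=
  U ≠ W ∧ ∃ u ∈ U.1, ∃ w ∈ W.1, E u w

/-!
A coarse edge `U → W` is realised by an edge `u → w` of `E` that leaves `U` and enters `W`.
Along a coarse path, consecutive realising edges enter and leave the same part, and the
cascade property of that part joins them by a walk in `E`. Hence a coarse path from `U`
to `W` lifts to a nonempty walk from a vertex leaving `U` to a vertex entering `W`; for a
coarse cycle, the cascade property of `U` closes this walk into a cycle of `E`.
-/

theorem IsInFunnel.isCascade {V : Type*} {E : V → V → Prop} {U : Set V}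
    (h : IsInFunnel E U) : IsCascade E U :=
  h.1

section Coarsening

variable {V : Type*} {E : V → V → Prop} {P : Set (Set V)}

theorem Setoid.IsPartition.subtype_eq_of_mem (hP : Setoid.IsPartition P)
    {S T : {S // S ∈ P}} {a : V} (haS : a ∈ S.1) (haT : a ∈ T.1) : S = T :=
  Subtype.ext (Setoid.eq_of_mem_eqv_class hP.2 S.2 haS T.2 haT)

theorem exists_tail_head_of_coarseEdge (hP : Setoid.IsPartition P)
    {U W : {S // S ∈ P}} (h : coarseEdge E P U W) :
    ∃ u ∈ U.1, ∃ w ∈ W.1, w ∉ U.1 ∧ u ∉ W.1 ∧ E u w := by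
  obtain ⟨hne, u, hu, w, hw, huw⟩ := h
  exact ⟨u, hu, w, hw, fun hwU => hne (hP.subtype_eq_of_mem hwU hw),
    fun huW => hne (hP.subtype_eq_of_mem hu huW), huw⟩

theorem exists_transGen_of_transGen_coarseEdge (hP : Setoid.IsPartition P)
    (hcas : ∀ U ∈ P, IsCascade E U) {U W : {S // S ∈ P}}
    (h : Relation.TransGen (coarseEdge E P) U W) :
    ∃ u ∈ U.1, ∃ w ∈ W.1, (∃ x, x ∉ U.1 ∧ E u x) ∧ (∃ x, x ∉ W.1 ∧ E x w) ∧
      Relation.TransGen E u w := by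
  induction h with
  | single h =>
    obtain ⟨u, hu, w, hw, hwU, huW, huw⟩ := exists_tail_head_of_coarseEdge hP h
    exact ⟨u, hu, w, hw, ⟨w, hwU, huw⟩, ⟨u, huW, huw⟩, .single huw⟩
  | @tail W X _ hWX ih =>
    obtain ⟨u, hu, w, hw, hout, hin, huw⟩ := ih
    obtain ⟨w', hw', x, hx, hxW, hw'X, hw'x⟩ := exists_tail_head_of_coarseEdge hP hWX
    have hww' : Relation.ReflTransGen E w w' :=
      hcas W.1 W.2 w hw w' hw' hin ⟨x, hxW, hw'x⟩
    exact ⟨u, hu, x, hx, hout, ⟨w', hw'X, hw'x⟩, (huw.trans_left hww').tail hw'x⟩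

theorem not_transGen_coarseEdge_self (hP : Setoid.IsPartition P)
    (hcas : ∀ U ∈ P, IsCascade E U) (hacyc : ∀ v : V, ¬ Relation.TransGen E v v)
    (U : {S // S ∈ P}) : ¬ Relation.TransGen (coarseEdge E P) U U := by
  intro hcyc
  obtain ⟨u, hu, w, hw, hout, hin, huw⟩ := exists_transGen_of_transGen_coarseEdge hP hcas hcyc
  exact hacyc u (huw.trans_left (hcas U.1 U.2 w hw u hu hin hout))

end Coarsening

theorem stmt2 {V : Type*} (E : V → V → Prop) (P : Set (Set V))
    (hP : Setoid.IsPartition P)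
    (hfun : ∀ U ∈ P, IsInFunnel E U)
    (hacyc : ∀ v : V, ¬ Relation.TransGen E v v) :
    (∀ U : Set V, IsInFunnel E U → IsCascade E U) ∧
    (∀ U : {S // S ∈ P}, ¬ Relation.TransGen (coarseEdge E P) U U) :=
  ⟨fun _ h => h.isCascade,
    not_transGen_coarseEdge_self hP (fun U hU => (hfun U hU).isCascade) hacyc⟩
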